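/- Assume the chronological products T on subsets of {1,…,n} satisfy the causality axiom. Let P ⊔ Q = {1,…,n−1} be a partition with P ≠ ∅ and write Qn := Q ∪ {n}. If x(Qn) ≥ x(P) then A′_n = −T(Qn)·T(P), and if x(P) ≥ x(Qn) then R′_n = −T(P)·T(Qn). -/

import Mathlib

/-- The Minkowski quadratic form on `ℝ⁴`. -/
def minkQ (x : Fin 4 → ℝ) : ℝ := x 0 ^ 2 - x 1 ^ 2 - x 2 ^ 2 - x 3 ^ 2

/-- The open backward light cone `V⁻`. -/
def Vminus : Set (Fin 4 → ℝ) := {x | 0 < minkQ x ∧ x 0 < 0}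

/-- Sum over all ordered partitions of `X` into `r ≥ 1` nonempty pairwise disjoint blocks
`X₁, …, X_r` of `(-1)^r * T X₁ * ⋯ * T X_r` (with value `1` for `X = ∅`), computed by peeling
off the first block. -/
def opSum {A : Type*} [Ring A] {ι : Type*} [DecidableEq ι]
    (T : Finset ι → A) (X : Finset ι) : A :=
  if _hX : X = ∅ then 1
  else
    ∑ Y ∈ (X.powerset.filter (fun Y => Y ≠ ∅)).attach,
      (-1 : A) * T Y.1 * opSum T (X \ Y.1)
termination_by X.card
decreasing_by
  have hY := Y.2
  simp only [Finset.mem_filter, Finset.mem_powerset] at hY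
  have h1 : Y.1.card ≤ X.card := Finset.card_le_card hY.1
  have h2 : 0 < Y.1.card := Finset.card_pos.mpr (Finset.nonempty_iff_ne_empty.mpr hY.2)
  rw [Finset.card_sdiff, Finset.inter_eq_left.mpr hY.1]
  omega

/-- The antichronological products `T̄`, defined by `T̄(∅) = 1` and
`(−1)^{|X|} T̄(X) = Σ_{r=1}^{|X|} (−1)^r Σ T(X₁)⋯T(X_r)`, the inner sum running over all ordered
partitions of `X` into `r` nonempty pairwise disjoint subsets. -/
def chronoBar {A : Type*} [Ring A] {ι : Type*} [DecidableEq ι]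
    (T : Finset ι → A) (X : Finset ι) : A :=
  (-1 : A) ^ X.card * opSum T X

/-- The advanced sum `A′_n := Σ (−1)^{|Y|} T(X)·T̄(Y)`, over all partitions
`X ⊔ Y = {1,…,n}` with `n ∈ X` (here `lst` plays the role of the index `n`) and `Y ≠ ∅`. -/
def advP {A : Type*} [Ring A] {ι : Type*} [Fintype ι] [DecidableEq ι]
    (T : Finset ι → A) (lst : ι) : A :=
  ∑ Y ∈ (Finset.univ.erase lst).powerset.filter (fun Y => Y ≠ ∅),
    (-1 : A) ^ Y.card * (T Yᶜ * chronoBar T Y)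

/-- The retarded sum `R′_n := Σ (−1)^{|Y|} T̄(Y)·T(X)`, over all partitions
`X ⊔ Y = {1,…,n}` with `n ∈ X` (here `lst` plays the role of the index `n`) and `Y ≠ ∅`. -/
def retP {A : Type*} [Ring A] {ι : Type*} [Fintype ι] [DecidableEq ι]
    (T : Finset ι → A) (lst : ι) : A :=
  ∑ Y ∈ (Finset.univ.erase lst).powerset.filter (fun Y => Y ≠ ∅),
    (-1 : A) ^ Y.card * (chronoBar T Y * T Yᶜ)

/-!
Since `(-1)^|Y| T̄(Y) = opSum T Y`, the signs in `A′_n` and `R′_n` cancel, and `opSum T` is the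
two-sided inverse of `T` for the subset convolution `(f ⋆ g)(X) = ∑_{Y ⊆ X} f(Y) g(X \ Y)`.
Inverting reverses products, so if `T` factorizes causally across `x(Qn) ≥ x(P)`, then
`opSum T Y = opSum T (Y ∩ P) · opSum T (Y ∩ Q)`. Writing `Y = Y_Q ∪ Y_P`, the advanced sum
completed by its `Y = ∅` term `T(Qn) T(P)` factors through
`∑_{Z ⊆ P} T(P \ Z) opSum T Z = (T ⋆ opSum T)(P) = 0`, as `P ≠ ∅`; symmetrically for `R′_n`.
-/

open Finset

theorem Finset.sum_powerset_union_of_disjoint {ι M : Type*} [DecidableEq ι] [AddCommMonoid M]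
    {X₁ X₂ : Finset ι} (h : Disjoint X₁ X₂) (F : Finset ι → M) :
    ∑ Y ∈ (X₁ ∪ X₂).powerset, F Y = ∑ Y₁ ∈ X₁.powerset, ∑ Y₂ ∈ X₂.powerset, F (Y₁ ∪ Y₂) := by
  rw [← sum_product']
  refine sum_nbij' (fun Y => (Y ∩ X₁, Y ∩ X₂)) (fun p => p.1 ∪ p.2) ?_ ?_ ?_ ?_ ?_ <;>
    simp only [mem_powerset, mem_product, Prod.forall, Prod.mk.injEq]
  · exact fun Y _ => ⟨inter_subset_right, inter_subset_right⟩
  · exact fun Y₁ Y₂ h => union_subset_union h.1 h.2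
  · grind
  · grind [disjoint_left]
  · intro Y hY
    congr
    grind

section SubsetConvolution

variable {ι A : Type*} [DecidableEq ι] [Ring A]

def subsetConv (f g : Finset ι → A) (X : Finset ι) : A :=
  ∑ Y ∈ X.powerset, f Y * g (X \ Y)

theorem subsetConv_apply_sdiff (f g : Finset ι → A) (X : Finset ι) :
    subsetConv f g X = ∑ Y ∈ X.powerset, f (X \ Y) * g Y :=
  sum_nbij' (X \ ·) (X \ ·) (fun _ _ => mem_powerset.2 sdiff_subset)
    (fun _ _ => mem_powerset.2 sdiff_subset)
    (fun _ hY => Finset.sdiff_sdiff_eq_self (mem_powerset.1 hY))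
    (fun _ hY => Finset.sdiff_sdiff_eq_self (mem_powerset.1 hY))
    (fun _ hY => by rw [Finset.sdiff_sdiff_eq_self (mem_powerset.1 hY)])

theorem subsetConv_single_empty (f : Finset ι → A) : subsetConv f (Pi.single ∅ 1) = f := by
  funext X
  rw [subsetConv, sum_eq_single_of_mem X (mem_powerset_self X), Finset.sdiff_self,
    Pi.single_eq_same, mul_one]
  intro Y hY hYX
  rw [Pi.single_eq_of_ne, mul_zero]
  exact fun h => hYX (Subset.antisymm (mem_powerset.1 hY) (sdiff_eq_empty_iff_subset.1 h))

theorem single_empty_subsetConv (f : Finset ι → A) : subsetConv (Pi.single ∅ 1) f = f := by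
  funext X
  rw [subsetConv, sum_eq_single_of_mem ∅ (empty_mem_powerset X), sdiff_empty,
    Pi.single_eq_same, one_mul]
  exact fun Y _ hY => by rw [Pi.single_eq_of_ne hY, zero_mul]

theorem subsetConv_assoc (f g h : Finset ι → A) :
    subsetConv (subsetConv f g) h = subsetConv f (subsetConv g h) := by
  funext X
  simp only [subsetConv, sum_mul, mul_sum, sum_sigma']
  refine sum_nbij' (fun p => ⟨p.2, p.1 \ p.2⟩) (fun p => ⟨p.1 ∪ p.2, p.1⟩) ?_ ?_ ?_ ?_ ?_ <;>
    simp only [mem_sigma, mem_powerset, Sigma.forall, Sigma.mk.injEq, heq_eq_eq]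
  iterate 4 · grind
  · intro Y Z h
    rw [mul_assoc, show (X \ Z) \ (Y \ Z) = X \ Y by grind]

variable (T : Finset ι → A)

theorem opSum_empty : opSum T ∅ = 1 := by
  rw [opSum, dif_pos rfl]

theorem opSum_of_ne_empty {X : Finset ι} (hX : X ≠ ∅) :
    opSum T X = -∑ Y ∈ X.powerset.erase ∅, T Y * opSum T (X \ Y) := by
  rw [opSum, dif_neg hX, sum_attach (X.powerset.filter (· ≠ ∅))
    (fun Y => (-1 : A) * T Y * opSum T (X \ Y)), filter_ne', ← sum_neg_distrib]
  simp only [neg_mul, one_mul]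

variable {T}

theorem subsetConv_opSum (hT : T ∅ = 1) : subsetConv T (opSum T) = Pi.single ∅ 1 := by
  funext X
  rw [subsetConv, ← add_sum_erase _ _ (empty_mem_powerset X), sdiff_empty, hT, one_mul]
  rcases eq_or_ne X ∅ with rfl | hX
  · simp [opSum_empty]
  · rw [opSum_of_ne_empty T hX, neg_add_cancel, Pi.single_eq_of_ne hX]

/-- `opSum (opSum T)` is a right inverse of `opSum T`, so the monoid argument
`T = T ⋆ (opSum T ⋆ opSum (opSum T)) = opSum (opSum T)` makes `opSum T` a left inverse too. -/
theorem opSum_subsetConv (hT : T ∅ = 1) : subsetConv (opSum T) T = Pi.single ∅ 1 := by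
  have hright := subsetConv_opSum (opSum_empty T)
  have hinv : opSum (opSum T) = T := calc
    opSum (opSum T) = subsetConv (subsetConv T (opSum T)) (opSum (opSum T)) := by
      rw [subsetConv_opSum hT, single_empty_subsetConv]
    _ = T := by rw [subsetConv_assoc, hright, subsetConv_single_empty]
  rwa [hinv] at hright

theorem eq_opSum_of_subsetConv_eq_single (hT : T ∅ = 1) {g : Finset ι → A} {X : Finset ι}
    (hg : ∀ Y ∈ X.powerset, subsetConv T g Y = (Pi.single ∅ 1 : Finset ι → A) Y) :
    g X = opSum T X := calc
  g X = subsetConv (subsetConv (opSum T) T) g X := by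
    rw [opSum_subsetConv hT, single_empty_subsetConv]
  _ = subsetConv (opSum T) (Pi.single ∅ 1) X := by
    rw [subsetConv_assoc]
    exact sum_congr rfl fun Y _ => by rw [hg _ (mem_powerset.2 sdiff_subset)]
  _ = opSum T X := by rw [subsetConv_single_empty]

variable (T) in
def Factorizes (S₁ S₂ : Finset ι) : Prop :=
  ∀ U ⊆ S₁, ∀ V ⊆ S₂, T (U ∪ V) = T U * T V

theorem Factorizes.mono {S₁ S₂ U V : Finset ι} (h : Factorizes T S₁ S₂) (hU : U ⊆ S₁)
    (hV : V ⊆ S₂) : Factorizes T U V :=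
  fun U' hU' V' hV' => h U' (hU'.trans hU) V' (hV'.trans hV)

theorem Factorizes.opSum_union (hT : T ∅ = 1) {U V : Finset ι} (hUV : Disjoint U V)
    (h : Factorizes T U V) : opSum T (U ∪ V) = opSum T V * opSum T U := by
  let g : Finset ι → A := fun W => opSum T (W ∩ V) * opSum T (W ∩ U)
  have hg : g (U ∪ V) = opSum T V * opSum T U := by
    simp only [g, show (U ∪ V) ∩ V = V by grind, show (U ∪ V) ∩ U = U by grind]
  refine hg ▸ (eq_opSum_of_subsetConv_eq_single hT fun Y hY => ?_).symm
  obtain ⟨Y₁, hY₁, Y₂, hY₂, rfl⟩ := mem_sups.1 (powerset_union U V ▸ hY)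
  rw [mem_powerset] at hY₁ hY₂
  rw [sup_eq_union, subsetConv, sum_powerset_union_of_disjoint (hUV.mono hY₁ hY₂)]
  calc ∑ Z₁ ∈ Y₁.powerset, ∑ Z₂ ∈ Y₂.powerset, T (Z₁ ∪ Z₂) * g ((Y₁ ∪ Y₂) \ (Z₁ ∪ Z₂))
      = ∑ Z₁ ∈ Y₁.powerset, T Z₁ * subsetConv T (opSum T) Y₂ * opSum T (Y₁ \ Z₁) := by
        refine sum_congr rfl fun Z₁ hZ₁ => ?_
        rw [subsetConv, mul_sum, sum_mul]
        refine sum_congr rfl fun Z₂ hZ₂ => ?_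
        rw [mem_powerset] at hZ₁ hZ₂
        rw [h Z₁ (hZ₁.trans hY₁) Z₂ (hZ₂.trans hY₂)]
        simp only [g, show ((Y₁ ∪ Y₂) \ (Z₁ ∪ Z₂)) ∩ V = Y₂ \ Z₂ by grind [disjoint_left],
          show ((Y₁ ∪ Y₂) \ (Z₁ ∪ Z₂)) ∩ U = Y₁ \ Z₁ by grind [disjoint_left], mul_assoc]
    _ = (Pi.single ∅ 1 : Finset ι → A) (Y₁ ∪ Y₂) := by
      rw [subsetConv_opSum hT]
      rcases eq_or_ne Y₂ ∅ with rfl | hY₂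
      · simp only [Pi.single_eq_same, mul_one, union_empty]
        exact congrFun (subsetConv_opSum hT) Y₁
      · rw [Pi.single_eq_of_ne hY₂, Pi.single_eq_of_ne (fun h => hY₂ (union_eq_empty.1 h).2)]
        simp only [mul_zero, zero_mul, sum_const_zero]

theorem sum_powerset_mul_opSum_eq_zero (hT : T ∅ = 1) {P Q R : Finset ι} (hQR : Q ⊆ R)
    (hRP : Disjoint R P) (hP : P ≠ ∅) (h : Factorizes T R P) :
    ∑ Y ∈ (Q ∪ P).powerset, T ((R ∪ P) \ Y) * opSum T Y = 0 := by
  rw [sum_powerset_union_of_disjoint (hRP.mono_left hQR)]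
  refine sum_eq_zero fun Yq hYq => ?_
  have hYqR : Yq ⊆ R := (mem_powerset.1 hYq).trans hQR
  calc ∑ Yp ∈ P.powerset, T ((R ∪ P) \ (Yq ∪ Yp)) * opSum T (Yq ∪ Yp)
      = T (R \ Yq) * subsetConv T (opSum T) P * opSum T Yq := by
        rw [subsetConv_apply_sdiff, mul_sum, sum_mul]
        refine sum_congr rfl fun Yp hYp => ?_
        rw [mem_powerset] at hYp
        rw [show (R ∪ P) \ (Yq ∪ Yp) = R \ Yq ∪ P \ Yp by grind [disjoint_left],
          h _ sdiff_subset _ sdiff_subset,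
          (h.mono hYqR hYp).opSum_union hT (hRP.mono hYqR hYp)]
        simp only [mul_assoc]
    _ = 0 := by rw [subsetConv_opSum hT, Pi.single_eq_of_ne hP, mul_zero, zero_mul]

theorem sum_powerset_opSum_mul_eq_zero (hT : T ∅ = 1) {P Q R : Finset ι} (hQR : Q ⊆ R)
    (hRP : Disjoint R P) (hP : P ≠ ∅) (h : Factorizes T P R) :
    ∑ Y ∈ (Q ∪ P).powerset, opSum T Y * T ((P ∪ R) \ Y) = 0 := by
  rw [sum_powerset_union_of_disjoint (hRP.mono_left hQR)]
  refine sum_eq_zero fun Yq hYq => ?_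
  have hYqR : Yq ⊆ R := (mem_powerset.1 hYq).trans hQR
  calc ∑ Yp ∈ P.powerset, opSum T (Yq ∪ Yp) * T ((P ∪ R) \ (Yq ∪ Yp))
      = opSum T Yq * subsetConv (opSum T) T P * T (R \ Yq) := by
        rw [subsetConv, mul_sum, sum_mul]
        refine sum_congr rfl fun Yp hYp => ?_
        rw [mem_powerset] at hYp
        rw [show (P ∪ R) \ (Yq ∪ Yp) = P \ Yp ∪ R \ Yq by grind [disjoint_left],
          h _ sdiff_subset _ sdiff_subset, union_comm,
          (h.mono hYp hYqR).opSum_union hT (hRP.symm.mono hYp hYqR)]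
        simp only [mul_assoc]
    _ = 0 := by rw [opSum_subsetConv hT, Pi.single_eq_of_ne hP, mul_zero, zero_mul]

theorem advP_eq_sum_sub [Fintype ι] (T : Finset ι → A) (m : ι) :
    advP T m = ∑ Y ∈ (univ.erase m).powerset, T (univ \ Y) * opSum T Y - T univ := by
  rw [eq_sub_iff_add_eq, advP, filter_ne', ← add_sum_erase _ _ (empty_mem_powerset _), add_comm,
    sdiff_empty, opSum_empty, mul_one]
  congr 1
  refine sum_congr rfl fun Y _ => ?_
  rw [chronoBar, compl_eq_univ_sdiff, ← mul_assoc (T _),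
    ← ((Commute.neg_one_left _).pow_left _).eq, mul_assoc, ← mul_assoc, ← pow_add,
    Even.neg_one_pow ⟨_, rfl⟩, one_mul]

theorem retP_eq_sum_sub [Fintype ι] (T : Finset ι → A) (m : ι) :
    retP T m = ∑ Y ∈ (univ.erase m).powerset, opSum T Y * T (univ \ Y) - T univ := by
  rw [eq_sub_iff_add_eq, retP, filter_ne', ← add_sum_erase _ _ (empty_mem_powerset _), add_comm,
    sdiff_empty, opSum_empty, one_mul]
  congr 1
  refine sum_congr rfl fun Y _ => ?_
  rw [chronoBar, compl_eq_univ_sdiff, ← mul_assoc, ← mul_assoc, ← pow_add,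
    Even.neg_one_pow ⟨_, rfl⟩, one_mul]

end SubsetConvolution

/-- Lemma on the advanced/retarded sums: for a partition `P ⊔ Q = {1,…,n−1}` with `P ≠ ∅`,
if `x(Q ∪ {n}) ≥ x(P)` then `A′_n = −T(Qn)·T(P)`, and if `x(P) ≥ x(Q ∪ {n})` then
`R′_n = −T(P)·T(Qn)`. -/
theorem advP_retP_eq_of_causality {A : Type*} [Ring A] (n : ℕ) (hn : 0 < n)
    (x : Fin n → Fin 4 → ℝ) (T : Finset (Fin n) → A) (hT1 : T ∅ = 1)
    (hcaus : ∀ S₁ S₂ : Finset (Fin n), Disjoint S₁ S₂ →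
      (∀ i ∈ S₁, ∀ j ∈ S₂, x i - x j ∉ closure Vminus) → T (S₁ ∪ S₂) = T S₁ * T S₂)
    (P Q : Finset (Fin n)) (hd : Disjoint P Q)
    (hPQ : P ∪ Q = Finset.univ.erase ⟨n - 1, by omega⟩) (hP : P ≠ ∅) :
    ((∀ i ∈ insert (⟨n - 1, by omega⟩ : Fin n) Q, ∀ j ∈ P, x i - x j ∉ closure Vminus) →
      advP T ⟨n - 1, by omega⟩ = -(T (insert ⟨n - 1, by omega⟩ Q) * T P)) ∧
    ((∀ i ∈ P, ∀ j ∈ insert (⟨n - 1, by omega⟩ : Fin n) Q, x i - x j ∉ closure Vminus) →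
      retP T ⟨n - 1, by omega⟩ = -(T P * T (insert ⟨n - 1, by omega⟩ Q))) := by
  set m : Fin n := ⟨n - 1, by omega⟩
  have hmP : m ∉ P := fun h => notMem_erase m univ (hPQ ▸ mem_union_left Q h)
  have hRP : Disjoint (insert m Q) P := disjoint_insert_left.2 ⟨hmP, hd.symm⟩
  have herase : univ.erase m = Q ∪ P := by rw [← hPQ, union_comm]
  have huniv : univ = insert m Q ∪ P := by
    rw [insert_union, ← herase, insert_erase (mem_univ m)]
  constructor
  · intro hcausal
    have hfac : Factorizes T (insert m Q) P := fun U hU V hV =>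
      hcaus U V (hRP.mono hU hV) fun i hi j hj => hcausal i (hU hi) j (hV hj)
    rw [advP_eq_sum_sub, herase, huniv,
      sum_powerset_mul_opSum_eq_zero hT1 (subset_insert m Q) hRP hP hfac, zero_sub,
      hfac _ Subset.rfl _ Subset.rfl]
  · intro hcausal
    have hfac : Factorizes T P (insert m Q) := fun U hU V hV =>
      hcaus U V (hRP.symm.mono hU hV) fun i hi j hj => hcausal i (hU hi) j (hV hj)
    rw [retP_eq_sum_sub, herase, huniv, union_comm (insert m Q) P,
      sum_powerset_opSum_mul_eq_zero hT1 (subset_insert m Q) hRP hP hfac, zero_sub,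
      hfac _ Subset.rfl _ Subset.rfl]
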